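/- arXiv:1902.00216 — 2 statements merged into one kernel-verified Lean document; each statement's English description precedes it below -/
import Mathlib

section
/- For any p-string T, the set PrevSub(T) of prev-encoded substrings of T is closed under the implicit suffix link: if u ∈ PrevSub(T) and u is nonempty, then sl(u) ∈ PrevSub(T). (In contrast, u[2:] itself need not belong to PrevSub(T).) -/
/-! Every `u ∈ PrevSub T` is `⟨w⟩` for a substring `w` of `T`, and `sl ⟨w⟩ = ⟨w[2:]⟩`, where
`w[2:]` is again a substring of `T`. Removing the first symbol of `w` leaves the encoding of every
later position unchanged, except at a parameter whose previous occurrence was the removed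
symbol: there `⟨w⟩` stores the distance to position 1, which is at least the position itself,
exactly the condition under which `⟨·⟩₁` resets the entry to `0`, as `⟨w[2:]⟩` requires. -/

open List

variable {σ π : Type*}

/-- The prev-encoding symbol of `w` at (0-indexed) position `i`:
constants are kept; a parameter is encoded by the distance to its
previous occurrence, or `0` if it has no previous occurrence. -/
def prevAt [DecidableEq σ] [DecidableEq π] (w : List (σ ⊕ π)) (i : ℕ) : σ ⊕ ℕ :=
  match w[i]? with
  | some (Sum.inl a) => Sum.inl a
  | some (Sum.inr x) =>
      let s := (Finset.range i).filter (fun j => w[j]? = some (Sum.inr x))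
      if h : s.Nonempty then Sum.inr (i - s.max' h) else Sum.inr 0
  | none => Sum.inr 0

/-- The prev-encoding `⟨w⟩` of a p-string `w`. -/
def prevEncode [DecidableEq σ] [DecidableEq π] (w : List (σ ⊕ π)) : List (σ ⊕ ℕ) :=
  (List.range w.length).map (prevAt w)

/-- The `k`-re-encoding `⟨u⟩ₖ` of a pv-string `u`: a numeric symbol `u[i]`
(1-indexed) is replaced by `0` whenever `u[i] ≥ i - k + 1`. -/
def reEncode (k : ℕ) (u : List (σ ⊕ ℕ)) : List (σ ⊕ ℕ) :=
  (List.range u.length).map (fun i =>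
    match u[i]? with
    | some (Sum.inl a) => Sum.inl a
    | some (Sum.inr m) => if i + 2 ≤ m + k then Sum.inr (0 : ℕ) else Sum.inr m
    | none => Sum.inr 0)

/-- The implicit suffix link `sl(u) = ⟨u[2:]⟩₁`. -/
def sl (u : List (σ ⊕ ℕ)) : List (σ ⊕ ℕ) := reEncode 1 u.tail

/-- The set of prev-encoded substrings of `T`. -/
def PrevSub [DecidableEq σ] [DecidableEq π] (T : List (σ ⊕ π)) : Set (List (σ ⊕ ℕ)) :=
  { u | ∃ w, w <:+: T ∧ u = prevEncode w }

theorem Nat.exists_greatest_lt_of_exists {P : ℕ → Prop} {i : ℕ} (h : ∃ k < i, P k) :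
    ∃ j < i, P j ∧ ∀ k, j < k → k < i → ¬ P k := by
  classical
  obtain ⟨k, hki, hk⟩ := h
  have hspec := Nat.findGreatest_spec (P := fun k => k < i ∧ P k) hki.le ⟨hki, hk⟩
  exact ⟨_, hspec.1, hspec.2, fun k hjk hki hk =>
    Nat.findGreatest_is_greatest (P := fun k => k < i ∧ P k) hjk hki.le ⟨hki, hk⟩⟩

def reEncodeAt (k i : ℕ) : σ ⊕ ℕ → σ ⊕ ℕ
  | Sum.inl a => Sum.inl a
  | Sum.inr m => if i + 2 ≤ m + k then Sum.inr 0 else Sum.inr m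

theorem getElem?_reEncode (k : ℕ) (u : List (σ ⊕ ℕ)) (i : ℕ) :
    (reEncode k u)[i]? = u[i]?.map (reEncodeAt k i) := by
  by_cases hi : i < u.length
  · rw [getElem?_eq_getElem hi]
    rcases h : u[i] with a | m <;> simp [reEncode, reEncodeAt, hi, h]
  · simp [reEncode, hi]

section prevAt

variable [DecidableEq σ] [DecidableEq π] {w : List (σ ⊕ π)} {i j : ℕ} {x : π}

theorem getElem?_prevEncode (w : List (σ ⊕ π)) (i : ℕ) :
    (prevEncode w)[i]? = if i < w.length then some (prevAt w i) else none := by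
  split_ifs with hi <;> simp [prevEncode, hi]

theorem prevAt_of_getElem?_eq_inl {a : σ} (h : w[i]? = some (Sum.inl a)) :
    prevAt w i = Sum.inl a := by
  simp [prevAt, h]

theorem prevAt_of_getElem?_eq_none (h : w[i]? = none) : prevAt w i = Sum.inr 0 := by
  simp [prevAt, h]

theorem prevAt_eq_zero_of_forall_ne (hi : w[i]? = some (Sum.inr x))
    (hfirst : ∀ k < i, w[k]? ≠ some (Sum.inr x)) : prevAt w i = Sum.inr 0 := by
  have hempty : ¬ ((Finset.range i).filter (fun j => w[j]? = some (Sum.inr x))).Nonempty := by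
    simpa [Finset.filter_nonempty_iff] using hfirst
  simp only [prevAt, hi, dif_neg hempty]

theorem prevAt_eq_sub_of_last (hi : w[i]? = some (Sum.inr x)) (hji : j < i)
    (hj : w[j]? = some (Sum.inr x)) (hlast : ∀ k, j < k → k < i → w[k]? ≠ some (Sum.inr x)) :
    prevAt w i = Sum.inr (i - j) := by
  set s := (Finset.range i).filter (fun k => w[k]? = some (Sum.inr x))
  have hjs : j ∈ s := by simpa [s] using ⟨hji, hj⟩
  have hmax : s.max' ⟨j, hjs⟩ = j := by
    refine le_antisymm (Finset.max'_le _ _ _ fun k hk => ?_) (s.le_max' j hjs)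
    simp only [s, Finset.mem_filter, Finset.mem_range] at hk
    by_contra! hjk
    exact hlast k hjk hk.1 hk.2
  simp only [prevAt, hi]
  rw [dif_pos ⟨j, hjs⟩, hmax]

end prevAt

section shift

variable [DecidableEq σ] [DecidableEq π]

theorem reEncodeAt_prevAt_cons (a : σ ⊕ π) (w : List (σ ⊕ π)) (i : ℕ) :
    reEncodeAt 1 i (prevAt (a :: w) (i + 1)) = prevAt w i := by
  have hcons : (a :: w)[i + 1]? = w[i]? := rfl
  rcases hwi : w[i]? with _ | b | x
  · rw [prevAt_of_getElem?_eq_none (hcons.trans hwi), prevAt_of_getElem?_eq_none hwi]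
    simp [reEncodeAt]
  · rw [prevAt_of_getElem?_eq_inl (hcons.trans hwi), prevAt_of_getElem?_eq_inl hwi]
    rfl
  by_cases hprev : ∃ k < i, w[k]? = some (Sum.inr x)
  · obtain ⟨j, hji, hj, hlast⟩ := Nat.exists_greatest_lt_of_exists hprev
    have hlast' : ∀ k, j + 1 < k → k < i + 1 → (a :: w)[k]? ≠ some (Sum.inr x) := by
      rintro (_ | k) hjk hki
      · omega
      · exact hlast k (by omega) (by omega)
    rw [prevAt_eq_sub_of_last (hcons.trans hwi) (by omega) hj hlast',
      prevAt_eq_sub_of_last hwi hji hj hlast]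
    simp only [reEncodeAt]
    rw [if_neg (by omega), Nat.add_sub_add_right]
  push Not at hprev
  rw [prevAt_eq_zero_of_forall_ne hwi hprev]
  have hlast : ∀ k, 0 < k → k < i + 1 → (a :: w)[k]? ≠ some (Sum.inr x) := by
    rintro (_ | k) hk hki
    · omega
    · exact hprev k (by omega)
  by_cases ha : a = Sum.inr x
  · rw [prevAt_eq_sub_of_last (hcons.trans hwi) (by omega) (by simp [ha]) hlast]
    simp [reEncodeAt]
  · have hfirst : ∀ k < i + 1, (a :: w)[k]? ≠ some (Sum.inr x) := by
      rintro (_ | k) hki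
      · simpa using ha
      · exact hlast (k + 1) (by omega) hki
    rw [prevAt_eq_zero_of_forall_ne (hcons.trans hwi) hfirst]
    simp [reEncodeAt]

theorem sl_prevEncode (w : List (σ ⊕ π)) : sl (prevEncode w) = prevEncode w.tail := by
  rcases w with _ | ⟨a, w⟩
  · rfl
  refine List.ext_getElem? fun i => ?_
  simp only [sl, getElem?_reEncode, getElem?_tail, getElem?_prevEncode, tail_cons, length_cons]
  split_ifs <;> first | omega | simp [reEncodeAt_prevAt_cons]

end shift

theorem sl_mem_prevSub_general [DecidableEq σ] [DecidableEq π]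
    (T : List (σ ⊕ π)) (u : List (σ ⊕ ℕ)) (hu : u ∈ PrevSub T) :
    sl u ∈ PrevSub T := by
  obtain ⟨w, hw, rfl⟩ := hu
  exact ⟨w.tail, (tail_suffix w).isInfix.trans hw, sl_prevEncode w⟩

/-- `PrevSub T` is closed under the implicit suffix link. -/
theorem sl_mem_prevSub [DecidableEq σ] [DecidableEq π]
    (T : List (σ ⊕ π)) (u : List (σ ⊕ ℕ)) (hu : u ∈ PrevSub T) (hne : u ≠ []) :
    sl u ∈ PrevSub T :=
  sl_mem_prevSub_general T u hu
end

section
/- Let T be a p-string of length n ending with a sentinel symbol $ ∈ Σ that occurs nowhere else in T. Then an element u of PrevSub(T) is a leaf (i.e., u is not a proper prefix of any element of PrevSub(T)) if and only if u = ⟨T[k:]⟩ for some 1 ≤ k ≤ n. Consequently PrevSub(T) has exactly n leaves. -/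
open List

variable {σ π : Type*}

/-- `u` is a leaf of `PrevSub T`: it belongs to `PrevSub T` and is not a
proper prefix of any element of `PrevSub T`. -/
def IsLeaf [DecidableEq σ] [DecidableEq π] (T : List (σ ⊕ π)) (u : List (σ ⊕ ℕ)) : Prop :=
  u ∈ PrevSub T ∧ ∀ v ∈ PrevSub T, u <+: v → u = v

/-- `u` is a branching element of `PrevSub T`: two distinct one-symbol
extensions of `u` belong to `PrevSub T`. -/
def Branching [DecidableEq σ] [DecidableEq π] (T : List (σ ⊕ π)) (u : List (σ ⊕ ℕ)) : Prop :=
  u ∈ PrevSub T ∧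
    ∃ a b : σ ⊕ ℕ, a ≠ b ∧ u ++ [a] ∈ PrevSub T ∧ u ++ [b] ∈ PrevSub T

/-!
A nonempty suffix of `T = T' $` is the only substring carrying a `$` at its last position, and
constants survive the prev-encoding in place, so no element of `PrevSub T` properly extends
its encoding. Conversely, a substring followed by a further letter of `T`, or the empty one,
is encoded by a proper prefix of another encoding, since prev-encodings of prefixes are
prefixes. Encodings of distinct suffixes differ in length, which gives the count.
-/

theorem List.length_le_of_getElem?_eq_of_infix_concat {α : Type*} {T w : List α} {x : α}
    (hx : x ∉ T) (hw : w <:+: T ++ [x]) {i : ℕ} (hi : w[i]? = some x) :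
    w.length ≤ i + 1 := by
  rcases infix_concat_iff.mp hw with hsuf | hinf
  · rcases suffix_concat_iff.mp hsuf with rfl | ⟨t, rfl, ht⟩
    · simp
    · by_contra! hlt
      rw [getElem?_append_left (by rw [length_append, length_singleton] at hlt; omega)] at hi
      exact hx (ht.mem (mem_of_getElem? hi))
  · exact absurd (hinf.mem (mem_of_getElem? hi)) hx

section PrevEncode

variable [DecidableEq σ] [DecidableEq π]

@[simp]
theorem length_prevEncode (w : List (σ ⊕ π)) : (prevEncode w).length = w.length := by
  simp [prevEncode]

theorem prevAt_of_prefix {w w' : List (σ ⊕ π)} (h : w <+: w') {i : ℕ} (hi : i < w.length) :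
    prevAt w' i = prevAt w i := by
  obtain ⟨t, rfl⟩ := h
  have hget : ∀ j < w.length, (w ++ t)[j]? = w[j]? := fun _ hj => getElem?_append_left hj
  unfold prevAt
  rw [hget i hi]
  rcases w[i]? with _ | (a | x)
  · rfl
  · rfl
  · have hocc : (Finset.range i).filter (fun j => (w ++ t)[j]? = some (Sum.inr x))
        = (Finset.range i).filter (fun j => w[j]? = some (Sum.inr x)) :=
      Finset.filter_congr fun j hj => by rw [hget j ((Finset.mem_range.mp hj).trans hi)]
    simp only [hocc]

theorem List.IsPrefix.prevEncode {w w' : List (σ ⊕ π)} (h : w <+: w') :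
    prevEncode w <+: prevEncode w' := by
  rw [prefix_iff_eq_take, length_prevEncode, _root_.prevEncode, _root_.prevEncode, ← map_take,
    take_range, min_eq_left h.length_le]
  exact map_congr_left fun i hi => (prevAt_of_prefix h (mem_range.mp hi)).symm

theorem getElem?_prevEncode_eq_inl_iff {w : List (σ ⊕ π)} {i : ℕ} {a : σ} :
    (prevEncode w)[i]? = some (Sum.inl a) ↔ w[i]? = some (Sum.inl a) := by
  simp only [prevEncode, getElem?_map]
  rcases lt_or_ge i w.length with hi | hi
  · rw [getElem?_range hi, Option.map_some, Option.some_inj]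
    unfold prevAt
    rcases w[i]? with _ | (b | x)
    · simp
    · simp
    · dsimp only; split <;> simp
  · rw [getElem?_eq_none (by simpa using hi), getElem?_eq_none hi]
    simp

theorem prevEncode_mem_prevSub {w T : List (σ ⊕ π)} (h : w <:+: T) :
    prevEncode w ∈ PrevSub T :=
  ⟨w, h, rfl⟩

theorem IsLeaf.eq_of_prefix {T w w' : List (σ ⊕ π)} (hleaf : IsLeaf T (prevEncode w))
    (hw' : w' <:+: T) (h : w <+: w') : w = w' :=
  h.eq_of_length <| by
    simpa using congrArg length (hleaf.2 _ (prevEncode_mem_prevSub hw') h.prevEncode)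

theorem IsLeaf.exists_eq_prevEncode_drop {T : List (σ ⊕ π)} {u : List (σ ⊕ ℕ)}
    (hleaf : IsLeaf T u) (hT : T ≠ []) : ∃ i < T.length, u = prevEncode (T.drop i) := by
  obtain ⟨w, ⟨s, t, hst⟩, rfl⟩ := hleaf.1
  have ht : w = w ++ t :=
    hleaf.eq_of_prefix ⟨s, [], by rw [← hst, append_nil, append_assoc]⟩ (prefix_append w t)
  have hw : w = T.drop s.length := by
    rw [← hst, append_assoc, drop_left, ← ht]
  have hwne : w ≠ [] := by
    rintro rfl
    exact hT (hleaf.eq_of_prefix (infix_refl T) nil_prefix).symm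
  exact ⟨s.length, by simpa [hw] using hwne, by rw [hw]⟩

theorem isLeaf_prevEncode_drop {T : List (σ ⊕ π)} {d : σ} (hd : Sum.inl d ∉ T) {i : ℕ}
    (hi : i < (T ++ [Sum.inl d]).length) :
    IsLeaf (T ++ [Sum.inl d]) (prevEncode ((T ++ [Sum.inl d]).drop i)) := by
  set w := (T ++ [Sum.inl d]).drop i
  refine ⟨prevEncode_mem_prevSub (drop_suffix _ _).isInfix, ?_⟩
  rintro v ⟨w', hw', rfl⟩ hpre
  rw [length_append, length_singleton] at hi
  have hlen : w.length = T.length + 1 - i := by simp [w]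
  have hlast : (prevEncode w)[w.length - 1]? = some (Sum.inl d) := by
    rw [getElem?_prevEncode_eq_inl_iff, getElem?_drop,
      show i + (w.length - 1) = T.length by omega]
    simp
  have hlast' : w'[w.length - 1]? = some (Sum.inl d) := by
    obtain ⟨r, hr⟩ := hpre
    rw [← getElem?_prevEncode_eq_inl_iff, ← hr,
      getElem?_append_left (by rw [length_prevEncode]; omega)]
    exact hlast
  have := length_le_of_getElem?_eq_of_infix_concat hd hw' hlast'
  refine hpre.eq_of_length_le ?_
  rw [length_prevEncode, length_prevEncode]
  omega

end PrevEncode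

/-- For a text `T = T' ++ [$]` ending with a sentinel `$ ∈ Σ` occurring nowhere
else, the leaves of `PrevSub T` are exactly the prev-encodings of the `n`
nonempty suffixes of `T`, and there are exactly `n` of them. -/
theorem leaves_eq_suffixes [DecidableEq σ] [DecidableEq π]
    (T' : List (σ ⊕ π)) (d : σ) (T : List (σ ⊕ π))
    (hT : T = T' ++ [Sum.inl d]) (hd : Sum.inl d ∉ T') :
    (∀ u : List (σ ⊕ ℕ),
        IsLeaf T u ↔ ∃ k, 1 ≤ k ∧ k ≤ T.length ∧ u = prevEncode (T.drop (k - 1))) ∧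
      {u : List (σ ⊕ ℕ) | IsLeaf T u}.ncard = T.length := by
  have hleaf : ∀ u, IsLeaf T u ↔ ∃ i < T.length, u = prevEncode (T.drop i) := by
    subst hT
    exact fun u => ⟨fun h => h.exists_eq_prevEncode_drop (by simp),
      by rintro ⟨i, hi, rfl⟩; exact isLeaf_prevEncode_drop hd hi⟩
  have hleaves : {u | IsLeaf T u} = (Finset.range T.length).image (prevEncode <| T.drop ·) := by
    ext u
    simp [hleaf, eq_comm]
  refine ⟨fun u => (hleaf u).trans ⟨?_, ?_⟩, ?_⟩
  · rintro ⟨i, hi, rfl⟩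
    exact ⟨i + 1, by omega, hi, rfl⟩
  · rintro ⟨k, hk, hkT, rfl⟩
    exact ⟨k - 1, by omega, rfl⟩
  · rw [hleaves, Set.ncard_coe_finset, Finset.card_image_of_injOn, Finset.card_range]
    intro i hi j hj hij
    have := congrArg length hij
    simp only [Finset.coe_range, Set.mem_Iio, length_prevEncode, length_drop] at hi hj this
    omega
end
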